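/- Let n be a positive integer, α > n/4, θ ∈ ℝ, and C_V, C_p ≥ 0. There exists a constant C > 0, depending only on n and α, such that the following holds. Let v, p, q : ℤ^n → ℂ with ‖v‖_{X_α} ≤ C_V and ‖p‖_{X_α}, ‖q‖_{X_α} ≤ C_p, suppose the function V_p(y) = Σ_k v_k e^{ik·y} is real-valued, and set φ_p(y) = Σ_k p_k e^{ik·y}, ψ_p(y) = Σ_k q_k e^{ik·y}. Then for every t ≥ 0, ‖e^{−it(V_p + θ|φ_p|²)} φ_p − e^{−it(V_p + θ|ψ_p|²)} ψ_p‖ ≤ e^{C (C_V + |θ| C_p²) t} ‖φ_p − ψ_p‖. -/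

import Mathlib

open MeasureTheory
open scoped Real

/-- The `X_α`-norm of a family of Fourier coefficients. -/
noncomputable def XalphaNorm (n : ℕ) (α : ℝ) (c : (Fin n → ℤ) → ℂ) : ℝ :=
  Real.sqrt (∑' k : Fin n → ℤ,
    (1 + Real.sqrt (∑ j, ((k j : ℝ)) ^ 2) ^ (4 * α)) * ‖c k‖ ^ 2)

/-- The Fourier series with coefficients `c`. -/
noncomputable def fourierSeries (n : ℕ) (c : (Fin n → ℤ) → ℂ) (y : Fin n → ℝ) : ℂ :=
  ∑' k : Fin n → ℤ, c k * Complex.exp (Complex.I * ((∑ j, (k j : ℝ) * y j : ℝ) : ℂ))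

/-- The normalized `L²` norm of a `2π`-periodic function over one period cell. -/
noncomputable def L2NormPeriodic (n : ℕ) (f : (Fin n → ℝ) → ℂ) : ℝ :=
  Real.sqrt ((((2 * π) ^ n)⁻¹ : ℝ) *
    ∫ y in Set.Icc (0 : Fin n → ℝ) (fun _ => 2 * π), ‖f y‖ ^ 2)

/-!
For `α > n/4` the weights `(1 + ‖k‖^{4α})⁻¹` are summable over `ℤⁿ` (they are dominated by
`2^{4α} ∏ⱼ (1 + |kⱼ|)^{-4α/n}`), so Cauchy–Schwarz gives `∑ |c_k| ≤ √S ‖c‖_{X_α}` with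
`S = ∑ₖ (1 + ‖k‖^{4α})⁻¹`. Hence `φ_p, ψ_p` are continuous and bounded by `M = √S C_p`.
Since `V_p` is real, both phase factors are unimodular and their phases differ by
`t|θ| ||φ_p|² - |ψ_p|²| ≤ 2t|θ|M |φ_p - ψ_p|`, which gives the pointwise bound
`(1 + 2t|θ|M²) |φ_p - ψ_p| ≤ e^{2S(C_V + |θ|C_p²)t} |φ_p - ψ_p|`; integrate, with `C = 2S`.
-/

theorem summable_and_tsum_le_sqrt_mul_sqrt {ι : Type*} {w a : ι → ℝ} (hw : ∀ i, 0 < w i)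
    (ha : ∀ i, 0 ≤ a i) (hw_sum : Summable fun i => (w i)⁻¹)
    (hwa_sum : Summable fun i => w i * a i ^ 2) :
    Summable a ∧ ∑' i, a i ≤ √(∑' i, (w i)⁻¹) * √(∑' i, w i * a i ^ 2) := by
  have hfg : ∀ i, √(w i)⁻¹ * (√(w i) * a i) = a i := fun i => by
    rw [← mul_assoc, ← Real.sqrt_mul (inv_nonneg.2 (hw i).le), inv_mul_cancel₀ (hw i).ne',
      Real.sqrt_one, one_mul]
  have hf : ∀ i, √(w i)⁻¹ ^ (2 : ℝ) = (w i)⁻¹ := fun i => by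
    rw [Real.rpow_two, Real.sq_sqrt (inv_nonneg.2 (hw i).le)]
  have hg : ∀ i, (√(w i) * a i) ^ (2 : ℝ) = w i * a i ^ 2 := fun i => by
    rw [Real.rpow_two, mul_pow, Real.sq_sqrt (hw i).le]
  have key := Real.summable_and_inner_le_Lp_mul_Lq_tsum_of_nonneg
    (f := fun i => √(w i)⁻¹) (g := fun i => √(w i) * a i) Real.HolderConjugate.two_two
    (fun i => Real.sqrt_nonneg _) (fun i => mul_nonneg (Real.sqrt_nonneg _) (ha i))
    (hw_sum.congr fun i => (hf i).symm) (hwa_sum.congr fun i => (hg i).symm)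
  simp only [hfg, hf, hg, ← Real.sqrt_eq_rpow] at key
  exact key

open Finset in
theorem summable_pi_prod_of_nonneg {ι κ : Type*} [Fintype ι] {f : κ → ℝ} (hf : ∀ m, 0 ≤ f m)
    (hs : Summable f) : Summable fun k : ι → κ => ∏ i, f (k i) := by
  classical
  refine summable_of_sum_le (c := (∑' m, f m) ^ Fintype.card ι)
    (fun k => prod_nonneg fun i _ => hf _) fun u => ?_
  set t : Finset κ := u.biUnion fun k => univ.image k
  have hut : u ⊆ Fintype.piFinset fun _ => t := fun k hk =>
    Fintype.mem_piFinset.2 fun i => mem_biUnion.2 ⟨k, hk, mem_image_of_mem k (mem_univ i)⟩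
  calc ∑ k ∈ u, ∏ i, f (k i)
      ≤ ∑ k ∈ Fintype.piFinset fun _ => t, ∏ i, f (k i) :=
        sum_le_sum_of_subset_of_nonneg hut fun k _ _ => prod_nonneg fun i _ => hf _
    _ = ∏ _i : ι, ∑ m ∈ t, f m := sum_prod_piFinset t fun _ => f
    _ ≤ ∏ _i : ι, ∑' m, f m :=
        prod_le_prod (fun _ _ => sum_nonneg fun m _ => hf m)
          fun _ _ => hs.sum_le_tsum t fun m _ => hf m
    _ = (∑' m, f m) ^ Fintype.card ι := prod_const _

theorem summable_one_add_abs_int_rpow_neg {s : ℝ} (hs : 1 < s) :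
    Summable fun m : ℤ => (1 + |(m : ℝ)|) ^ (-s) := by
  have h : Summable fun m : ℕ => (1 + (m : ℝ)) ^ (-s) :=
    ((Real.summable_one_div_nat_add_rpow 1 s).2 hs).congr fun m => by
      rw [Real.rpow_neg (by positivity), one_div, abs_of_nonneg (by positivity), add_comm]
  rw [summable_int_iff_summable_nat_and_neg]
  exact ⟨h.congr fun m => by simp, h.congr fun m => by simp⟩

-- `XalphaNorm n α c` unfolds to `√(∑' k, sobolevWeight n (4 * α) k * ‖c k‖ ^ 2)`.
noncomputable def sobolevWeight (n : ℕ) (s : ℝ) (k : Fin n → ℤ) : ℝ :=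
  1 + Real.sqrt (∑ j, ((k j : ℝ)) ^ 2) ^ s

theorem sobolevWeight_pos (n : ℕ) (s : ℝ) (k : Fin n → ℤ) : 0 < sobolevWeight n s k := by
  unfold sobolevWeight; positivity

theorem one_add_rpow_le_two_rpow_mul {r s : ℝ} (hr : 0 ≤ r) (hs : 0 ≤ s) :
    (1 + r) ^ s ≤ 2 ^ s * (1 + r ^ s) := by
  rcases le_total r 1 with h | h
  · calc (1 + r) ^ s ≤ 2 ^ s := Real.rpow_le_rpow (by positivity) (by linarith) hs
      _ ≤ 2 ^ s * (1 + r ^ s) := le_mul_of_one_le_right (by positivity)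
          (le_add_of_nonneg_right (by positivity))
  · calc (1 + r) ^ s ≤ (2 * r) ^ s := Real.rpow_le_rpow (by positivity) (by linarith) hs
      _ = 2 ^ s * r ^ s := Real.mul_rpow zero_le_two hr
      _ ≤ 2 ^ s * (1 + r ^ s) := by gcongr; linarith

theorem inv_sobolevWeight_le_prod {n : ℕ} (hn : 0 < n) {s : ℝ} (hs : 0 ≤ s) (k : Fin n → ℤ) :
    (sobolevWeight n s k)⁻¹ ≤ 2 ^ s * ∏ j, (1 + |(k j : ℝ)|) ^ (-(s / n)) := by
  set r := Real.sqrt (∑ j, ((k j : ℝ)) ^ 2)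
  have hr : 0 ≤ r := Real.sqrt_nonneg _
  have hkr : ∀ j, |(k j : ℝ)| ≤ r := fun j => Real.abs_le_sqrt
    (Finset.single_le_sum (f := fun j => ((k j : ℝ)) ^ 2) (fun j _ => sq_nonneg _)
      (Finset.mem_univ j))
  have hprod : (1 + r) ^ (-s) = ∏ _j : Fin n, (1 + r) ^ (-(s / n)) := by
    rw [Finset.prod_const, Finset.card_univ, Fintype.card_fin,
      ← Real.rpow_mul_natCast (by positivity)]
    field_simp
  calc (sobolevWeight n s k)⁻¹ ≤ 2 ^ s * (1 + r) ^ (-s) := by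
        rw [Real.rpow_neg (by positivity), ← div_eq_mul_inv, le_div_iff₀ (by positivity),
          inv_mul_eq_div, div_le_iff₀ (sobolevWeight_pos n s k)]
        exact one_add_rpow_le_two_rpow_mul hr hs
    _ ≤ 2 ^ s * ∏ j, (1 + |(k j : ℝ)|) ^ (-(s / n)) := by
        rw [hprod]
        refine mul_le_mul_of_nonneg_left (Finset.prod_le_prod (fun _ _ => by positivity)
          fun j _ => Real.rpow_le_rpow_of_nonpos (by positivity : (0 : ℝ) < 1 + |(k j : ℝ)|)
            (by linarith [hkr j]) (neg_nonpos.2 (by positivity))) (by positivity)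

theorem summable_inv_sobolevWeight {n : ℕ} {s : ℝ} (hs : n < s) :
    Summable fun k => (sobolevWeight n s k)⁻¹ := by
  rcases Nat.eq_zero_or_pos n with rfl | hn
  · exact .of_finite
  have hsn : 1 < s / n := by rwa [one_lt_div (by positivity)]
  exact ((summable_pi_prod_of_nonneg (fun _ => by positivity)
    (summable_one_add_abs_int_rpow_neg hsn)).mul_left (2 ^ s)).of_nonneg_of_le
    (fun k => (inv_pos.2 (sobolevWeight_pos n s k)).le)
    (inv_sobolevWeight_le_prod hn ((Nat.cast_nonneg n).trans hs.le))

theorem summable_norm_and_tsum_norm_le_XalphaNorm {n : ℕ} {α : ℝ} (hα : (n : ℝ) / 4 < α)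
    {c : (Fin n → ℤ) → ℂ} (hc : Summable fun k => sobolevWeight n (4 * α) k * ‖c k‖ ^ 2) :
    (Summable fun k => ‖c k‖) ∧
      ∑' k, ‖c k‖ ≤ √(∑' k, (sobolevWeight n (4 * α) k)⁻¹) * XalphaNorm n α c :=
  summable_and_tsum_le_sqrt_mul_sqrt (sobolevWeight_pos n _) (fun _ => norm_nonneg _)
    (summable_inv_sobolevWeight (by linarith)) hc

theorem norm_fourierSeries_term (n : ℕ) (c : (Fin n → ℤ) → ℂ) (k : Fin n → ℤ) (y : Fin n → ℝ) :
    ‖c k * Complex.exp (Complex.I * ((∑ j, (k j : ℝ) * y j : ℝ) : ℂ))‖ = ‖c k‖ := by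
  rw [norm_mul, Complex.norm_exp_I_mul_ofReal, mul_one]

theorem norm_fourierSeries_le {n : ℕ} {c : (Fin n → ℤ) → ℂ} (hc : Summable fun k => ‖c k‖)
    (y : Fin n → ℝ) : ‖fourierSeries n c y‖ ≤ ∑' k, ‖c k‖ := by
  simp only [fourierSeries, ← norm_fourierSeries_term n c _ y]
  exact norm_tsum_le_tsum_norm (hc.congr fun k => (norm_fourierSeries_term n c k y).symm)

theorem continuous_fourierSeries {n : ℕ} {c : (Fin n → ℤ) → ℂ} (hc : Summable fun k => ‖c k‖) :
    Continuous (fourierSeries n c) :=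
  continuous_tsum (fun k => by fun_prop) hc fun k y => (norm_fourierSeries_term n c k y).le

theorem norm_exp_I_mul_sub_exp_I_mul_le (u v : ℝ) (a b : ℂ) :
    ‖Complex.exp (Complex.I * u) * a - Complex.exp (Complex.I * v) * b‖
      ≤ ‖a - b‖ + |u - v| * ‖a‖ := by
  have hsplit : Complex.exp (Complex.I * u) * a - Complex.exp (Complex.I * v) * b
      = Complex.exp (Complex.I * v) *
          ((a - b) + (Complex.exp (Complex.I * ((u - v : ℝ) : ℂ)) - 1) * a) := by
    rw [show Complex.exp (Complex.I * u)
        = Complex.exp (Complex.I * v) * Complex.exp (Complex.I * ((u - v : ℝ) : ℂ)) by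
      rw [← Complex.exp_add]; push_cast; ring_nf]
    ring
  rw [hsplit, norm_mul, Complex.norm_exp_I_mul_ofReal, one_mul]
  refine (norm_add_le _ _).trans ?_
  rw [norm_mul]
  gcongr
  exact Real.norm_exp_I_mul_ofReal_sub_one_le

theorem abs_norm_sq_sub_norm_sq_le {E : Type*} [SeminormedAddCommGroup E] (a b : E) :
    |‖a‖ ^ 2 - ‖b‖ ^ 2| ≤ (‖a‖ + ‖b‖) * ‖a - b‖ := by
  rw [sq_sub_sq, abs_mul, abs_of_nonneg (by positivity : 0 ≤ ‖a‖ + ‖b‖)]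
  exact mul_le_mul_of_nonneg_left (abs_norm_sub_norm_le a b) (by positivity)

theorem norm_phase_sub_le (t θ V : ℝ) {a b : ℂ} {M : ℝ} (ha : ‖a‖ ≤ M) (hb : ‖b‖ ≤ M) :
    ‖Complex.exp (-Complex.I * t * (V + θ * ((‖a‖ : ℝ) : ℂ) ^ 2)) * a -
        Complex.exp (-Complex.I * t * (V + θ * ((‖b‖ : ℝ) : ℂ) ^ 2)) * b‖
      ≤ (1 + 2 * |t| * |θ| * M ^ 2) * ‖a - b‖ := by
  have hphase : ∀ z : ℂ, -Complex.I * t * (V + θ * ((‖z‖ : ℝ) : ℂ) ^ 2)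
      = Complex.I * ((-(t * (V + θ * ‖z‖ ^ 2)) : ℝ) : ℂ) := fun z => by push_cast; ring
  have hdiff : |-(t * (V + θ * ‖a‖ ^ 2)) - -(t * (V + θ * ‖b‖ ^ 2))|
      = |t| * |θ| * |‖a‖ ^ 2 - ‖b‖ ^ 2| := by
    rw [show -(t * (V + θ * ‖a‖ ^ 2)) - -(t * (V + θ * ‖b‖ ^ 2))
        = -(t * θ * (‖a‖ ^ 2 - ‖b‖ ^ 2)) by ring, abs_neg, abs_mul, abs_mul]
  have hM : 0 ≤ M := (norm_nonneg a).trans ha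
  rw [hphase, hphase]
  refine (norm_exp_I_mul_sub_exp_I_mul_le _ _ a b).trans ?_
  rw [hdiff]
  calc ‖a - b‖ + |t| * |θ| * |‖a‖ ^ 2 - ‖b‖ ^ 2| * ‖a‖
      ≤ ‖a - b‖ + |t| * |θ| * ((M + M) * ‖a - b‖) * M := by
        gcongr
        exact (abs_norm_sq_sub_norm_sq_le a b).trans (by gcongr)
    _ = (1 + 2 * |t| * |θ| * M ^ 2) * ‖a - b‖ := by ring

theorem L2NormPeriodic_le_mul {n : ℕ} {f g : (Fin n → ℝ) → ℂ} (hg : Continuous g) {K : ℝ}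
    (hK : 0 ≤ K) (hfg : ∀ y, ‖f y‖ ≤ K * ‖g y‖) :
    L2NormPeriodic n f ≤ K * L2NormPeriodic n g := by
  have hint : ∫ y in Set.Icc (0 : Fin n → ℝ) (fun _ => 2 * π), ‖f y‖ ^ 2
      ≤ K ^ 2 * ∫ y in Set.Icc (0 : Fin n → ℝ) (fun _ => 2 * π), ‖g y‖ ^ 2 := by
    rw [← integral_const_mul]
    refine integral_mono_of_nonneg (.of_forall fun y => by positivity)
      ((hg.norm.pow 2).const_mul _).integrableOn_Icc (.of_forall fun y => ?_)
    change ‖f y‖ ^ 2 ≤ K ^ 2 * ‖g y‖ ^ 2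
    rw [← mul_pow]
    exact pow_le_pow_left₀ (norm_nonneg _) (hfg y) 2
  rw [L2NormPeriodic, L2NormPeriodic, ← Real.sqrt_sq hK, ← Real.sqrt_mul (sq_nonneg K)]
  refine Real.sqrt_le_sqrt ?_
  rw [mul_left_comm]
  exact mul_le_mul_of_nonneg_left hint (by positivity)

theorem phase_flow_stability_general
    (n : ℕ) (α : ℝ) (hα : (n : ℝ) / 4 < α) (θ C_V C_p : ℝ) :
    ∃ C : ℝ, 0 < C ∧
      ∀ v p q : (Fin n → ℤ) → ℂ,
        Summable (fun k : Fin n → ℤ =>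
          (1 + Real.sqrt (∑ j, ((k j : ℝ)) ^ 2) ^ (4 * α)) * ‖v k‖ ^ 2) →
        Summable (fun k : Fin n → ℤ =>
          (1 + Real.sqrt (∑ j, ((k j : ℝ)) ^ 2) ^ (4 * α)) * ‖p k‖ ^ 2) →
        Summable (fun k : Fin n → ℤ =>
          (1 + Real.sqrt (∑ j, ((k j : ℝ)) ^ 2) ^ (4 * α)) * ‖q k‖ ^ 2) →
        XalphaNorm n α v ≤ C_V → XalphaNorm n α p ≤ C_p → XalphaNorm n α q ≤ C_p →
        (∀ y : Fin n → ℝ, (fourierSeries n v y).im = 0) →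
        ∀ t : ℝ, 0 ≤ t →
          L2NormPeriodic n (fun y =>
              Complex.exp (-Complex.I * (t : ℂ) *
                  (fourierSeries n v y +
                    (θ : ℂ) * ((‖fourierSeries n p y‖ : ℝ) : ℂ) ^ 2)) *
                fourierSeries n p y -
              Complex.exp (-Complex.I * (t : ℂ) *
                  (fourierSeries n v y +
                    (θ : ℂ) * ((‖fourierSeries n q y‖ : ℝ) : ℂ) ^ 2)) *
                fourierSeries n q y)
            ≤ Real.exp (C * (C_V + |θ| * C_p ^ 2) * t) *
                L2NormPeriodic n (fun y => fourierSeries n p y - fourierSeries n q y) := by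
  set S := ∑' k, (sobolevWeight n (4 * α) k)⁻¹
  have hS : 0 < S := (summable_inv_sobolevWeight (by linarith)).tsum_pos
    (fun k => (inv_pos.2 (sobolevWeight_pos n _ k)).le) 0 (inv_pos.2 (sobolevWeight_pos n _ 0))
  refine ⟨2 * S, by positivity, fun v p q _ hp hq hvB hpB hqB hreal t ht => ?_⟩
  obtain ⟨hp_sum, hp_tsum⟩ := summable_norm_and_tsum_norm_le_XalphaNorm hα hp
  obtain ⟨hq_sum, hq_tsum⟩ := summable_norm_and_tsum_norm_le_XalphaNorm hα hq
  have hφ : ∀ y, ‖fourierSeries n p y‖ ≤ √S * C_p := fun y =>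
    (norm_fourierSeries_le hp_sum y).trans (hp_tsum.trans (by gcongr))
  have hψ : ∀ y, ‖fourierSeries n q y‖ ≤ √S * C_p := fun y =>
    (norm_fourierSeries_le hq_sum y).trans (hq_tsum.trans (by gcongr))
  have hgrowth : 1 + 2 * |t| * |θ| * (√S * C_p) ^ 2
      ≤ Real.exp (2 * S * (C_V + |θ| * C_p ^ 2) * t) := by
    have hCV : 0 ≤ C_V := (Real.sqrt_nonneg _).trans hvB
    rw [abs_of_nonneg ht, mul_pow, Real.sq_sqrt hS.le]
    calc 1 + 2 * t * |θ| * (S * C_p ^ 2) ≤ Real.exp (2 * t * |θ| * (S * C_p ^ 2)) := by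
          linarith [Real.add_one_le_exp (2 * t * |θ| * (S * C_p ^ 2))]
      _ ≤ Real.exp (2 * S * (C_V + |θ| * C_p ^ 2) * t) :=
          Real.exp_le_exp.2 (by nlinarith [mul_nonneg (mul_nonneg hS.le hCV) ht])
  refine L2NormPeriodic_le_mul ((continuous_fourierSeries hp_sum).sub
    (continuous_fourierSeries hq_sum)) (Real.exp_pos _).le fun y => ?_
  rw [← Complex.ext (Complex.ofReal_re _) (hreal y).symm]
  exact (norm_phase_sub_le t θ _ (hφ y) (hψ y)).trans
    (mul_le_mul_of_nonneg_right hgrowth (norm_nonneg _))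

/-- Lipschitz stability of the nonlinear phase flow of the potential
subproblem: with `‖v‖_{X_α} ≤ C_V` and `‖p‖_{X_α}, ‖q‖_{X_α} ≤ C_p`,
`‖e^{-it(V_p+θ|φ_p|²)}φ_p − e^{-it(V_p+θ|ψ_p|²)}ψ_p‖
  ≤ e^{C(C_V + |θ|C_p²)t} ‖φ_p − ψ_p‖`. -/
theorem phase_flow_stability
    (n : ℕ) (hn : 0 < n) (α : ℝ) (hα : (n : ℝ) / 4 < α) (θ C_V C_p : ℝ)
    (hCV : 0 ≤ C_V) (hCp : 0 ≤ C_p) :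
    ∃ C : ℝ, 0 < C ∧
      ∀ v p q : (Fin n → ℤ) → ℂ,
        Summable (fun k : Fin n → ℤ =>
          (1 + Real.sqrt (∑ j, ((k j : ℝ)) ^ 2) ^ (4 * α)) * ‖v k‖ ^ 2) →
        Summable (fun k : Fin n → ℤ =>
          (1 + Real.sqrt (∑ j, ((k j : ℝ)) ^ 2) ^ (4 * α)) * ‖p k‖ ^ 2) →
        Summable (fun k : Fin n → ℤ =>
          (1 + Real.sqrt (∑ j, ((k j : ℝ)) ^ 2) ^ (4 * α)) * ‖q k‖ ^ 2) →
        XalphaNorm n α v ≤ C_V → XalphaNorm n α p ≤ C_p → XalphaNorm n α q ≤ C_p →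
        (∀ y : Fin n → ℝ, (fourierSeries n v y).im = 0) →
        ∀ t : ℝ, 0 ≤ t →
          L2NormPeriodic n (fun y =>
              Complex.exp (-Complex.I * (t : ℂ) *
                  (fourierSeries n v y +
                    (θ : ℂ) * ((‖fourierSeries n p y‖ : ℝ) : ℂ) ^ 2)) *
                fourierSeries n p y -
              Complex.exp (-Complex.I * (t : ℂ) *
                  (fourierSeries n v y +
                    (θ : ℂ) * ((‖fourierSeries n q y‖ : ℝ) : ℂ) ^ 2)) *
                fourierSeries n q y)
            ≤ Real.exp (C * (C_V + |θ| * C_p ^ 2) * t) *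
                L2NormPeriodic n (fun y => fourierSeries n p y - fourierSeries n q y) :=
  phase_flow_stability_general n α hα θ C_V C_p
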